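/- The functions g_{j,l}(t) = (cos^l(t−t_j)/sin^l(t−t_j)) · ∏_{i=1}^{k} sin^{m_i}(t−t_i), for j = 1,…,k and l = 1,…,m_j (where l ≤ m_j so the product is a trigonometric polynomial), are linearly independent over ℝ. -/

import Mathlib

open Real Filter Topology

/-! Dividing a vanishing combination `∑ c_{j,l} g_{j,l}` by `∏ᵢ sin^{mᵢ}(x - tᵢ)`, whose zeros are
isolated, gives `∑ c_{j,l} cot^l(x - tⱼ) = 0` on a punctured neighbourhood of each `tⱼ`. There the
terms with `i ≠ j` stay bounded, because the `tᵢ` are distinct modulo `π`, while the terms with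
index `j` form a polynomial without constant term in `1 / tan(x - tⱼ)` and `tan(x - tⱼ) → 0`;
so its coefficients `c_{j,l}` vanish, from the highest pole down. -/

theorem eq_zero_of_eventually_sum_div_pow_add_eq_zero {α 𝕜 : Type*} [NormedField 𝕜]
    {l : Filter α} [l.NeBot] {u h : α → 𝕜} {b : 𝕜}
    (hu : Tendsto u l (𝓝 0)) (hu0 : ∀ᶠ x in l, u x ≠ 0) (hh : Tendsto h l (𝓝 b)) :
    ∀ {N : ℕ} (a : Fin N → 𝕜), (∀ᶠ x in l, ∑ n, a n / u x ^ (n.val + 1) + h x = 0) → a = 0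
  | 0, a, _ => Subsingleton.elim _ _
  | N + 1, a, hsum => by
    -- multiplying by `u ^ (N + 1)` isolates the coefficient of the highest pole
    have hpow : ∀ m ≠ 0, Tendsto (fun x => u x ^ m) l (𝓝 0) := fun m hm => by
      simpa [zero_pow hm] using hu.pow m
    have hlim : Tendsto (fun x => ∑ n : Fin N, a n.castSucc * u x ^ (N - n)
        + a (Fin.last N) + h x * u x ^ (N + 1)) l (𝓝 (a (Fin.last N))) := by
      convert ((tendsto_finsetSum Finset.univ fun (n : Fin N) _ =>
        (hpow (N - n) (Nat.sub_ne_zero_of_lt n.isLt)).const_mul (a n.castSucc)).add_const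
          (a (Fin.last N))).add (hh.mul (hpow _ N.succ_ne_zero)) using 2
      simp
    have hlast : a (Fin.last N) = 0 := by
      refine tendsto_nhds_unique hlim (tendsto_const_nhds.congr' ?_)
      filter_upwards [hsum, hu0] with x hx hx0
      rw [← zero_mul (u x ^ (N + 1)), ← hx, Fin.sum_univ_castSucc, add_mul, add_mul,
        Finset.sum_mul]
      congr 2
      · refine Finset.sum_congr rfl fun n _ => ?_
        rw [Fin.val_castSucc, show N + 1 = (n + 1) + (N - n) by omega, pow_add _ (n.val + 1)]
        field_simp
      · rw [Fin.val_last, div_mul_cancel₀ _ (pow_ne_zero _ hx0)]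
    have hinit : a ∘ Fin.castSucc = 0 := by
      refine eq_zero_of_eventually_sum_div_pow_add_eq_zero hu hu0 hh _ ?_
      filter_upwards [hsum] with x hx
      simpa [Fin.sum_univ_castSucc, hlast] using hx
    funext n
    induction n using Fin.lastCases with
    | last => exact hlast
    | cast n => exact congrFun hinit n

theorem Real.sin_sub_ne_zero_of_mem_Ioo {x y : ℝ} (hx : x ∈ Set.Ioo 0 π) (hy : y ∈ Set.Ioo 0 π)
    (hxy : x ≠ y) : sin (x - y) ≠ 0 := fun h =>
  hxy <| sub_eq_zero.mp <|
    (sin_eq_zero_iff_of_lt_of_lt (by linarith [hx.1, hy.2]) (by linarith [hx.2, hy.1])).mp h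

-- at a zero of `sin (· - b)` the derivative `cos (a - b) = ±1` does not vanish
theorem Real.eventually_sin_sub_ne_zero (a b : ℝ) : ∀ᶠ x in 𝓝[≠] a, sin (x - b) ≠ 0 := by
  by_cases hab : sin (a - b) = 0
  · have hcos : cos (a - b) ≠ 0 := fun h => by simpa [hab, h] using sin_sq_add_cos_sq (a - b)
    have hderiv : HasDerivAt (fun x => sin (x - b)) (cos (a - b)) a := by
      simpa using ((hasDerivAt_id a).sub_const b).sin
    exact hderiv.eventually_ne hcos
  · exact nhdsWithin_le_nhds <| (by fun_prop : ContinuousAt (fun x => sin (x - b)) a).eventually_ne hab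

theorem Real.tendsto_tan_sub_nhdsNE (a : ℝ) : Tendsto (fun x => tan (x - a)) (𝓝[≠] a) (𝓝 0) := by
  have hcont : ContinuousAt (fun x => tan (x - a)) a :=
    (continuousAt_tan.mpr (by simp)).comp (by fun_prop)
  simpa using hcont.tendsto.mono_left nhdsWithin_le_nhds

theorem Real.eventually_tan_sub_ne_zero (a : ℝ) : ∀ᶠ x in 𝓝[≠] a, tan (x - a) ≠ 0 := by
  have hcos : ∀ᶠ x in 𝓝[≠] a, cos (x - a) ≠ 0 := nhdsWithin_le_nhds <|
    (by fun_prop : ContinuousAt (fun x => cos (x - a)) a).eventually_ne (by simp)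
  filter_upwards [eventually_sin_sub_ne_zero a a, hcos] with x hsin hcos
  rw [tan_eq_sin_div_cos]
  exact div_ne_zero hsin hcos

theorem stmt9_general (k : ℕ) (t : Fin k → ℝ)
    (ht : ∀ j, t j ∈ Set.Ioo (0:ℝ) π)
    (htinj : Function.Injective t)
    (mult : Fin k → ℕ) :
    LinearIndependent ℝ
      (fun p : Σ j : Fin k, Fin (mult j) =>
        (fun x : ℝ =>
          (Real.cos (x - t p.1)) ^ (p.2.val + 1) / (Real.sin (x - t p.1)) ^ (p.2.val + 1)
            * ∏ i, (Real.sin (x - t i)) ^ (mult i))) := by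
  classical
  rw [Fintype.linearIndependent_iff]
  rintro c hc ⟨j, l⟩
  have hcot : ∀ᶠ x in 𝓝[≠] t j, ∑ p : Σ j : Fin k, Fin (mult j),
      c p * (cos (x - t p.1) ^ (p.2.val + 1) / sin (x - t p.1) ^ (p.2.val + 1)) = 0 := by
    filter_upwards [eventually_all.mpr fun i => eventually_sin_sub_ne_zero (t j) (t i)] with x hx
    have hsum := congrFun hc x
    simp only [Finset.sum_apply, Pi.smul_apply, smul_eq_mul, ← mul_assoc, ← Finset.sum_mul,
      Pi.zero_apply] at hsum
    exact (mul_eq_zero.mp hsum).resolve_right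
      (Finset.prod_ne_zero_iff.mpr fun i _ => pow_ne_zero _ (hx i))
  have hrest : Tendsto (fun x => ∑ i ∈ {j}ᶜ, ∑ n : Fin (mult i),
      c ⟨i, n⟩ * (cos (x - t i) ^ (n.val + 1) / sin (x - t i) ^ (n.val + 1))) (𝓝[≠] t j)
      (𝓝 (∑ i ∈ {j}ᶜ, ∑ n : Fin (mult i),
        c ⟨i, n⟩ * (cos (t j - t i) ^ (n.val + 1) / sin (t j - t i) ^ (n.val + 1)))) := by
    refine tendsto_finsetSum _ fun i hi => tendsto_finsetSum _ fun n _ => ?_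
    have hsin : sin (t j - t i) ≠ 0 :=
      sin_sub_ne_zero_of_mem_Ioo (ht j) (ht i) (htinj.ne (by simpa [eq_comm] using hi))
    refine ContinuousAt.tendsto ?_ |>.mono_left nhdsWithin_le_nhds
    exact continuousAt_const.mul ((by fun_prop : Continuous _).continuousAt.div
      (by fun_prop) (pow_ne_zero _ hsin))
  have hcoeff := eq_zero_of_eventually_sum_div_pow_add_eq_zero (tendsto_tan_sub_nhdsNE (t j))
    (eventually_tan_sub_ne_zero (t j)) hrest (fun n => c ⟨j, n⟩) ?_
  · exact congrFun hcoeff l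
  filter_upwards [hcot] with x hx
  rw [Fintype.sum_sigma, Fintype.sum_eq_add_sum_compl j] at hx
  convert hx using 3 with n
  rw [tan_eq_sin_div_cos, div_pow, div_div_eq_mul_div, mul_div_assoc]

/-- The functions
`g_{j,l}(t) = (cos^l(t−tⱼ)/sin^l(t−tⱼ)) · ∏ᵢ sin^{mᵢ}(t−tᵢ)`, for `j = 1,…,k`
and `l = 1,…,mⱼ`, are linearly independent over `ℝ`. -/
theorem stmt9 (k : ℕ) (t : Fin k → ℝ)
    (ht : ∀ j, t j ∈ Set.Ioo (0:ℝ) π)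
    (htinj : Function.Injective t)
    (mult : Fin k → ℕ) (hmult : ∀ j, 0 < mult j) :
    LinearIndependent ℝ
      (fun p : Σ j : Fin k, Fin (mult j) =>
        (fun x : ℝ =>
          (Real.cos (x - t p.1)) ^ (p.2.val + 1) / (Real.sin (x - t p.1)) ^ (p.2.val + 1)
            * ∏ i, (Real.sin (x - t i)) ^ (mult i))) :=
  stmt9_general k t ht htinj mult
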